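/- arXiv:1911.08920 — 2 statements merged into one kernel-verified Lean document; each statement's English description precedes it below -/
import Mathlib

section
/- Let ω : (0,∞) → ℝ be continuous and suppose r·ω(r) → A as r → ∞ for some constant A (i.e., ω is asymptotically equal to A/r). Then every differentiable solution v of the fundamental relation v'(r) = 2ω(r) − v(r)/r on (0,∞) satisfies v(r) → 2A as r → ∞. (Forward direction of the paper's Theorem: equatorial orbits have tangential velocity asymptotically equal to the constant Q = 2A.) -/
/-!
Multiplying the fundamental relation by `r` gives `(r v)' = 2 r ω → 2A`, and a function whose
derivative tends to `L` grows like `L r` (the `∞/∞` case of L'Hôpital's rule), so `v = (r v)/r → 2A`.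
-/

open Filter Topology Asymptotics

section DerivativeAtTop

variable {E : Type*} [NormedAddCommGroup E] [NormedSpace ℝ E]

theorem isLittleO_id_of_hasDerivAt_tendsto_zero {h h' : ℝ → E}
    (hh : ∀ᶠ x in atTop, HasDerivAt h (h' x) x) (hh' : Tendsto h' atTop (𝓝 0)) :
    h =o[atTop] id := by
  refine isLittleO_iff.2 fun ε hε => ?_
  obtain ⟨R, hR⟩ := eventually_atTop.1 <| (eventually_ge_atTop 0).and <|
    hh.and (hh'.eventually (Metric.closedBall_mem_nhds 0 (half_pos hε)))
  have hR0 : 0 ≤ R := (hR R le_rfl).1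
  have hlip : ∀ r ≥ R, ‖h r - h R‖ ≤ ε / 2 * (r - R) := fun r hr => by
    have := Convex.norm_image_sub_le_of_norm_hasDerivWithin_le
      (fun x hx => (hR x hx).2.1.hasDerivWithinAt)
      (fun x hx => by simpa using (hR x hx).2.2) (convex_Ici R) (Set.self_mem_Ici) hr
    rwa [Real.norm_of_nonneg (sub_nonneg.2 hr)] at this
  filter_upwards [eventually_ge_atTop R, eventually_ge_atTop (2 * ‖h R‖ / ε)] with r hrR hrh
  have : 2 * ‖h R‖ ≤ ε * r := by rwa [div_le_iff₀' hε] at hrh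
  calc ‖h r‖ ≤ ‖h R‖ + ‖h r - h R‖ := norm_le_insert' _ _
    _ ≤ ε * ‖id r‖ := by
      rw [id, Real.norm_of_nonneg (hR0.trans hrR)]
      nlinarith [hlip r hrR, mul_nonneg hε.le hR0]

theorem tendsto_inv_smul_of_hasDerivAt_tendsto {f f' : ℝ → E} {L : E}
    (hf : ∀ᶠ x in atTop, HasDerivAt f (f' x) x) (hf' : Tendsto f' atTop (𝓝 L)) :
    Tendsto (fun r => r⁻¹ • f r) atTop (𝓝 L) := by
  have hlin : (fun r => f r - r • L) =o[atTop] id :=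
    isLittleO_id_of_hasDerivAt_tendsto_zero
      (hf.mono fun x hx => hx.sub ((hasDerivAt_id x).smul_const L))
      (by simpa using hf'.sub_const L)
  refine (by simpa using hlin.tendsto_inv_smul_nhds_zero.add_const L :
    Tendsto (fun r => r⁻¹ • (f r - r • L) + L) atTop (𝓝 L)).congr' ?_
  filter_upwards [eventually_ne_atTop 0] with r hr
  rw [smul_sub, smul_smul, inv_mul_cancel₀ hr, one_smul, sub_add_cancel]

end DerivativeAtTop

theorem hasDerivAt_mul_tangential_velocity {ω v : ℝ → ℝ} {r : ℝ} (hr : 0 < r)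
    (hv : HasDerivAt v (2 * ω r - v r / r) r) :
    HasDerivAt (fun s => s * v s) (2 * (r * ω r)) r :=
  ((hasDerivAt_id' r).mul hv).congr_deriv (by field_simp; ring)

theorem tangential_velocity_tendsto_two_A_general
    (ω : ℝ → ℝ) (A : ℝ)
    (hA : Filter.Tendsto (fun r : ℝ => r * ω r) Filter.atTop (nhds A))
    (v : ℝ → ℝ)
    (hv : ∀ r > (0 : ℝ), HasDerivAt v (2 * ω r - v r / r) r) :
    Filter.Tendsto v Filter.atTop (nhds (2 * A)) := by
  have hrv : ∀ᶠ r in atTop, HasDerivAt (fun s => s * v s) (2 * (r * ω r)) r :=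
    (eventually_gt_atTop 0).mono fun r hr => hasDerivAt_mul_tangential_velocity hr (hv r hr)
  refine (tendsto_inv_smul_of_hasDerivAt_tendsto hrv (hA.const_mul 2)).congr' ?_
  filter_upwards [eventually_ne_atTop 0] with r hr
  simp [smul_eq_mul, inv_mul_cancel_left₀ hr]

/-- If `r ω(r) → A` as `r → ∞`, then every differentiable solution of the
fundamental relation `v' = 2ω - v/r` satisfies `v(r) → 2A` as `r → ∞`. -/
theorem tangential_velocity_tendsto_two_A
    (ω : ℝ → ℝ) (hω : ContinuousOn ω (Set.Ioi 0)) (A : ℝ)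
    (hA : Filter.Tendsto (fun r : ℝ => r * ω r) Filter.atTop (nhds A))
    (v : ℝ → ℝ)
    (hv : ∀ r > (0 : ℝ), HasDerivAt v (2 * ω r - v r / r) r) :
    Filter.Tendsto v Filter.atTop (nhds (2 * A)) :=
  tangential_velocity_tendsto_two_A_general ω A hA v hv
end

section
/- Let ω : (0,∞) → ℝ be continuous and suppose the limit L = lim_{r→∞} r·ω(r) exists. If some differentiable solution v of the fundamental relation v'(r) = 2ω(r) − v(r)/r on (0,∞) satisfies v(r) → Q as r → ∞, then Q = 2L. (Converse direction of the paper's Theorem, under the assumption that r·ω(r) converges.) -/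
/-! Multiplying the relation by `r` turns it into `(r v(r))' = 2 r ω(r)`. By the mean value theorem
on `[r, 2r]`, the slope `(2r v(2r) - r v(r)) / r = 2 v(2r) - v(r)`, which tends to `Q`, equals
`2 c ω(c)` for some `c ∈ (r, 2r)`, which tends to `2L`. -/

open Filter Set Topology

theorem tendsto_doubling_slope_of_tendsto_div_self {f : ℝ → ℝ} {m : ℝ}
    (hm : Tendsto (fun x => f x / x) atTop (𝓝 m)) :
    Tendsto (fun r => (f (2 * r) - f r) / (2 * r - r)) atTop (𝓝 m) := by
  have hdouble : Tendsto (fun r => 2 * (f (2 * r) / (2 * r)) - f r / r) atTop (𝓝 (2 * m - m)) :=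
    ((hm.comp (tendsto_id.const_mul_atTop two_pos)).const_mul 2).sub hm
  rw [two_mul m, add_sub_cancel_right] at hdouble
  refine hdouble.congr' ?_
  filter_upwards [eventually_ne_atTop 0] with r hr
  field_simp
  ring

theorem eq_of_tendsto_div_self_of_tendsto_deriv {f f' : ℝ → ℝ} {l m : ℝ}
    (hf : ∀ᶠ x in atTop, HasDerivAt f (f' x) x) (hf' : Tendsto f' atTop (𝓝 l))
    (hm : Tendsto (fun x => f x / x) atTop (𝓝 m)) : m = l := by
  obtain ⟨a, ha⟩ := eventually_atTop.1 hf
  have hmvt : ∀ r ≥ max a 1, ∃ c ∈ Ioo r (2 * r), f' c = (f (2 * r) - f r) / (2 * r - r) := by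
    intro r hr
    have hr1 : 1 ≤ r := le_of_max_le_right hr
    have hderiv : ∀ x ∈ Icc r (2 * r), HasDerivAt f (f' x) x :=
      fun x hx => ha x ((le_of_max_le_left hr).trans hx.1)
    exact exists_hasDerivAt_eq_slope f f' (by linarith)
      (fun x hx => (hderiv x hx).continuousAt.continuousWithinAt)
      (fun x hx => hderiv x (Ioo_subset_Icc_self hx))
  choose! c hc_mem hc_slope using hmvt
  have hc : Tendsto c atTop atTop :=
    tendsto_atTop_mono' atTop (eventually_atTop.2 ⟨max a 1, fun r hr => (hc_mem r hr).1.le⟩)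
      tendsto_id
  refine tendsto_nhds_unique (tendsto_doubling_slope_of_tendsto_div_self hm) ?_
  exact (hf'.comp hc).congr' (eventually_atTop.2 ⟨max a 1, hc_slope⟩)

theorem asymptotic_velocity_determines_drag_general
    (ω : ℝ → ℝ) (L : ℝ)
    (hL : Filter.Tendsto (fun r : ℝ => r * ω r) Filter.atTop (nhds L))
    (v : ℝ → ℝ)
    (hv : ∀ r > (0 : ℝ), HasDerivAt v (2 * ω r - v r / r) r)
    (Q : ℝ) (hQ : Filter.Tendsto v Filter.atTop (nhds Q)) :
    Q = 2 * L := by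
  have hmoment : ∀ᶠ r in atTop, HasDerivAt (fun x => x * v x) (2 * (r * ω r)) r := by
    filter_upwards [eventually_gt_atTop 0] with r hr
    refine ((hasDerivAt_id r).mul (hv r hr)).congr_deriv ?_
    rw [id_eq]
    field_simp
    ring
  have hratio : Tendsto (fun x => x * v x / x) atTop (𝓝 Q) := by
    refine hQ.congr' ?_
    filter_upwards [eventually_ne_atTop 0] with x hx
    rw [mul_div_cancel_left₀ _ hx]
  exact eq_of_tendsto_div_self_of_tendsto_deriv hmoment (hL.const_mul 2) hratio

/-- If `r ω(r) → L` as `r → ∞` and some solution of the fundamental relation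
has `v(r) → Q` as `r → ∞`, then `Q = 2L`. -/
theorem asymptotic_velocity_determines_drag
    (ω : ℝ → ℝ) (hω : ContinuousOn ω (Set.Ioi 0)) (L : ℝ)
    (hL : Filter.Tendsto (fun r : ℝ => r * ω r) Filter.atTop (nhds L))
    (v : ℝ → ℝ)
    (hv : ∀ r > (0 : ℝ), HasDerivAt v (2 * ω r - v r / r) r)
    (Q : ℝ) (hQ : Filter.Tendsto v Filter.atTop (nhds Q)) :
    Q = 2 * L :=
  asymptotic_velocity_determines_drag_general ω L hL v hv Q hQ
end
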